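/- Let G act transitively and freely on a set X (so X is a G-torsor with base point x₀), and let c : X → Fin k be a perfect surjective colouring with c(x₀) = 1. Then K₁ = {f ∈ G : c(f • x₀) = 1} is a subgroup of G of index k, and for each colour i, the set K_i = {f ∈ G : c(f • x₀) = i} is a left coset of K₁. -/

import Mathlib

/-!
A perfect colouring `c` makes the partition of `X` into colour classes `G`-invariant:
`c (g • x) = c (g • y) ↔ c x = c y`. Transporting it to `G` along the orbit map `f ↦ f • x₀`
gives a left-invariant partition of `G`, i.e. the left cosets of the class `K` of `1`. The orbit map
is onto, so the cosets of `K` correspond bijectively to the colours, whence `[G : K] = k`.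
-/

open Function
open scoped Pointwise

def IsPerfectColouring (G : Type*) {X Y : Type*} [SMul G X] (c : X → Y) : Prop :=
  ∀ g : G, ∃ π : Equiv.Perm Y, ∀ x, c (g • x) = π (c x)

namespace IsPerfectColouring

variable {G X Y : Type*} [Group G] [MulAction G X] {c : X → Y}

theorem smul_eq_smul_iff (hc : IsPerfectColouring G c) (g : G) {x y : X} :
    c (g • x) = c (g • y) ↔ c x = c y := by
  obtain ⟨π, hπ⟩ := hc g
  rw [hπ, hπ, π.apply_eq_iff_eq]

def colourSubgroup (hc : IsPerfectColouring G c) (x₀ : X) : Subgroup G where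
  carrier := {g | c (g • x₀) = c x₀}
  one_mem' := by simp
  mul_mem' {a b} (ha : c (a • x₀) = c x₀) (hb : c (b • x₀) = c x₀) := by
    change c ((a * b) • x₀) = c x₀
    rw [mul_smul, ← ha]
    exact (hc.smul_eq_smul_iff a).mpr hb
  inv_mem' {a} (ha : c (a • x₀) = c x₀) := by
    change c (a⁻¹ • x₀) = c x₀
    rw [← hc.smul_eq_smul_iff a, smul_inv_smul, ha]

variable (hc : IsPerfectColouring G c) (x₀ : X)

theorem coe_colourSubgroup : (hc.colourSubgroup x₀ : Set G) = {g | c (g • x₀) = c x₀} := rfl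

theorem inv_mul_mem_colourSubgroup_iff {f g : G} :
    f⁻¹ * g ∈ hc.colourSubgroup x₀ ↔ c (f • x₀) = c (g • x₀) := by
  change c ((f⁻¹ * g) • x₀) = c x₀ ↔ _
  rw [← hc.smul_eq_smul_iff f, mul_smul, smul_inv_smul, eq_comm]

theorem colourClass_eq_leftCoset (f : G) :
    {g | c (g • x₀) = c (f • x₀)} = (fun s => f * s) '' (hc.colourSubgroup x₀ : Set G) := by
  ext g
  change _ ↔ g ∈ f • (hc.colourSubgroup x₀ : Set G)
  rw [mem_leftCoset_iff, SetLike.mem_coe, inv_mul_mem_colourSubgroup_iff,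
    Set.mem_ofPred_eq, eq_comm]

theorem index_colourSubgroup [MulAction.IsPretransitive G X] (hsurj : Surjective c) :
    (hc.colourSubgroup x₀).index = Nat.card Y := by
  have horbit : Surjective fun g : G => c (g • x₀) :=
    hsurj.comp (MulAction.surjective_smul G x₀)
  have hrel : QuotientGroup.leftRel (hc.colourSubgroup x₀) = Setoid.ker fun g => c (g • x₀) :=
    Setoid.ext fun _ _ => QuotientGroup.leftRel_apply.trans (hc.inv_mul_mem_colourSubgroup_iff x₀)
  rw [Subgroup.index_eq_card]
  exact Nat.card_congr ((Quotient.congrRight (Setoid.ext_iff.mp hrel)).trans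
    (Setoid.quotientKerEquivOfSurjective _ horbit))

end IsPerfectColouring

theorem stmt_5_general {G X : Type*} [Group G] [MulAction G X] {k : ℕ} [NeZero k]
    [MulAction.IsPretransitive G X]
    (c : X → Fin k) (hc : Function.Surjective c)
    (hperf : ∀ g : G, ∃ π : Equiv.Perm (Fin k), ∀ x : X, c (g • x) = π (c x))
    (x₀ : X) (hx₀ : c x₀ = 0) :
    ∃ K : Subgroup G, (K : Set G) = {f : G | c (f • x₀) = 0} ∧ K.index = k ∧
      ∀ i : Fin k, ∃ f : G, {g : G | c (g • x₀) = i} = (fun s => f * s) '' (K : Set G) := by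
  have hperf : IsPerfectColouring G c := hperf
  refine ⟨hperf.colourSubgroup x₀, by rw [hperf.coe_colourSubgroup, hx₀], ?_, fun i => ?_⟩
  · rw [hperf.index_colourSubgroup x₀ hc, Nat.card_fin]
  · obtain ⟨f, rfl⟩ := (hc.comp (MulAction.surjective_smul G x₀)) i
    exact ⟨f, hperf.colourClass_eq_leftCoset x₀ f⟩

/-- Every perfect surjective colouring of a `G`-torsor with base point `x₀` of colour `0`
arises from a subgroup `K₁` of index `k`: the colour classes are the left cosets of `K₁`. -/
theorem stmt_5 {G X : Type*} [Group G] [MulAction G X] {k : ℕ} [NeZero k]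
    [MulAction.IsPretransitive G X]
    (hfree : ∀ (g : G) (x : X), g • x = x → g = 1)
    (c : X → Fin k) (hc : Function.Surjective c)
    (hperf : ∀ g : G, ∃ π : Equiv.Perm (Fin k), ∀ x : X, c (g • x) = π (c x))
    (x₀ : X) (hx₀ : c x₀ = 0) :
    ∃ K : Subgroup G, (K : Set G) = {f : G | c (f • x₀) = 0} ∧ K.index = k ∧
      ∀ i : Fin k, ∃ f : G, {g : G | c (g • x₀) = i} = (fun s => f * s) '' (K : Set G) :=
  stmt_5_general c hc hperf x₀ hx₀
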